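/- Let M be a compact smooth manifold with a smooth positive density μ, and let Δ : C^∞(M) → C^∞(M) be a local linear operator for which there exist a finite open cover M = U₁ ∪ … ∪ U_k and, for each α ∈ {1,…,k}, finitely many smooth vector fields X₁^(α),…,X_{d_α}^(α) on M such that Δu = Σ_{j=1}^{d_α} (X_j^(α))* X_j^(α) u for every u ∈ C^∞(M) with supp u ⊆ U_α. Let X be a smooth vector field on M such that for every x ∈ M there exist an index α, an open neighbourhood U ⊆ U_α of x, and smooth functions a_1,…,a_{d_α} ∈ C^∞(U) with X|_U = Σ_{j=1}^{d_α} a_j · X_j^(α)|_U. Then there exists a constant C > 0 such that ‖Xu‖²_{L²(M,μ)} ≤ C ( (Δu, u)_{L²(M,μ)} + ‖u‖²_{L²(M,μ)} ) for every u ∈ C^∞(M). -/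

import Mathlib

open scoped Manifold
open TopologicalSpace Bundle

noncomputable section

variable {EM : Type*} [NormedAddCommGroup EM] [NormedSpace ℝ EM] [FiniteDimensional ℝ EM]
  {HM : Type*} [TopologicalSpace HM] (I : ModelWithCorners ℝ EM HM)
  (M : Type*) [TopologicalSpace M] [ChartedSpace HM M] [IsManifold I ((⊤ : ℕ∞) : WithTop ℕ∞) M]

/-- The commutative ring `C^∞(M)` of smooth real-valued functions on `M`. -/
abbrev Cinf := ContMDiffMap I (modelWithCornersSelf ℝ ℝ) M ℝ (⊤ : ℕ∞)

/-- Vector fields on `M`: (not necessarily smooth) sections of the tangent bundle. -/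
abbrev VectorField := ∀ x : M, TangentSpace I x

/-- `C^∞(M)`-module structure on vector fields, by pointwise multiplication. -/
instance : Module (Cinf I M) (VectorField I M) :=
  Module.compHom _ (ContMDiffMap.coeFnRingHom : Cinf I M →+* (M → ℝ))

instance : IsScalarTower ℝ (Cinf I M) (VectorField I M) := by
  constructor
  intro r f X
  funext x
  show ((r • f : Cinf I M) x) • X x = r • ((f x) • X x)
  rw [show (r • f : Cinf I M) x = r • f x from rfl, smul_assoc]

/-- A vector field is smooth if it is smooth as a section of the tangent bundle. -/
def IsSmoothVF (X : VectorField I M) : Prop :=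
  ContMDiff I I.tangent (⊤ : ℕ∞) (fun x => (⟨x, X x⟩ : TangentBundle I M))

/-- A vector field has compact support. -/
def HasCptSuppVF (X : VectorField I M) : Prop :=
  ∃ K : Set M, IsCompact K ∧ ∀ x ∉ K, X x = 0

/-- A smooth function has compact support. -/
def HasCptSuppFn (f : Cinf I M) : Prop :=
  ∃ K : Set M, IsCompact K ∧ ∀ x ∉ K, f x = 0

/-- Restriction of a vector field on `M` to an open subset `U`. -/
def restrictVF (X : VectorField I M) (U : Opens M) : VectorField I U :=
  fun y => X (y : M)

/-- The restriction `𝒟|_U` of a `C^∞(M)`-submodule of vector fields to an open set `U`: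
the `C^∞(U)`-submodule generated by the products `f • (X|_U)` with `f ∈ C_c^∞(U)`, `X ∈ 𝒟`. -/
def restrictMod (𝒟 : Submodule (Cinf I M) (VectorField I M)) (U : Opens M) :
    Submodule (Cinf I U) (VectorField I U) :=
  Submodule.span _
    {Y | ∃ f : Cinf I U, HasCptSuppFn I U f ∧ ∃ X ∈ 𝒟, Y = f • restrictVF I M X U}

/-- A submodule of vector fields is locally finitely generated. -/
def IsLocallyFinitelyGenerated (𝒟 : Submodule (Cinf I M) (VectorField I M)) : Prop :=
  ∀ x : M, ∃ U : Opens M, x ∈ U ∧ ∃ (k : ℕ) (X : Fin k → VectorField I M),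
    (∀ i, IsSmoothVF I M (X i)) ∧
    restrictMod I M 𝒟 U = Submodule.span (Cinf I U)
      {Y | ∃ (i : Fin k) (f : Cinf I U), HasCptSuppFn I U f ∧ Y = f • restrictVF I M (X i) U}

/-- A smooth (generalised) distribution on `M`: a locally finitely generated
`C^∞(M)`-submodule of the compactly supported smooth vector fields. -/
structure IsSmoothDistribution (𝒟 : Submodule (Cinf I M) (VectorField I M)) : Prop where
  smooth : ∀ X ∈ 𝒟, IsSmoothVF I M X
  cptSupp : ∀ X ∈ 𝒟, HasCptSuppVF I M X
  locFinGen : IsLocallyFinitelyGenerated I M 𝒟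

/-- The ideal `I_x` of smooth functions vanishing at `x`. -/
def idealAt (x : M) : Ideal (Cinf I M) :=
  RingHom.ker (ContMDiffMap.evalRingHom x : Cinf I M →+* ℝ)

variable {I M} (𝒟 : Submodule (Cinf I M) (VectorField I M))

/-- The submodule `I_x·𝒟` of `𝒟`, viewed as an `ℝ`-subspace. -/
def fiberSub (x : M) : Submodule ℝ ↥𝒟 :=
  (idealAt I M x • (⊤ : Submodule (Cinf I M) ↥𝒟)).restrictScalars ℝ

/-- The fiber `𝒟_x = 𝒟 / I_x𝒟` of the distribution at `x`. -/
abbrev Fiber (x : M) := ↥𝒟 ⧸ fiberSub 𝒟 x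

/-- The class `[X]_x ∈ 𝒟_x` of `X ∈ 𝒟`. -/
def cls (x : M) (X : ↥𝒟) : Fiber 𝒟 x := Submodule.Quotient.mk X

/-- Evaluation of elements of `𝒟` at `x`, as an `ℝ`-linear map to the tangent space. -/
def evalD (x : M) : ↥𝒟 →ₗ[ℝ] TangentSpace I x where
  toFun X := X.1 x
  map_add' X Y := rfl
  map_smul' r X := rfl

theorem fiberSub_le_ker (x : M) : fiberSub 𝒟 x ≤ LinearMap.ker (evalD 𝒟 x) := by
  intro X hX
  replace hX : X ∈ idealAt I M x • (⊤ : Submodule (Cinf I M) ↥𝒟) := hX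
  refine Submodule.smul_induction_on hX ?_ ?_
  · intro f hf Y _
    have hfx : (f : Cinf I M) x = 0 := hf
    simp only [LinearMap.mem_ker]
    show ((f • Y : ↥𝒟) : VectorField I M) x = 0
    rw [Submodule.coe_smul]
    show (f x) • ((Y : VectorField I M) x) = 0
    rw [hfx, zero_smul]
  · intro a b ha hb
    exact add_mem ha hb

/-- Evaluation `ev_x : 𝒟_x → T_xM` on the fiber. -/
def evalQ (x : M) : Fiber 𝒟 x →ₗ[ℝ] TangentSpace I x :=
  Submodule.liftQ _ (evalD 𝒟 x) (fiberSub_le_ker 𝒟 x)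

open MeasureTheory

variable (I M) in
/-- `μ` is a smooth positive density on `M`: in every extended chart it is given by a
smooth positive density function with respect to the volume on the model vector space. -/
def IsSmoothPositiveDensity [MeasurableSpace M] [MeasureSpace EM] [BorelSpace EM]
    (μ : Measure M) : Prop :=
  ∀ x : M, ∃ ρ : EM → ℝ,
    ContDiffOn ℝ (⊤ : ℕ∞) ρ (extChartAt I x).target ∧
    (∀ z ∈ (extChartAt I x).target, 0 < ρ z) ∧
    Measure.map (extChartAt I x) (μ.restrict (extChartAt I x).source) =
      (volume.withDensity fun z => ENNReal.ofReal (ρ z)).restrict (extChartAt I x).target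

variable (I M) in
/-- `D` is the first-order differential operator `u ↦ Xu` on smooth functions given by
the smooth vector field `X`. -/
def IsVFDerivation (X : VectorField I M) (D : Cinf I M →ₗ[ℝ] Cinf I M) : Prop :=
  ∀ (u : Cinf I M) (x : M),
    D u x = (mfderiv I (modelWithCornersSelf ℝ ℝ) u x (X x) : ℝ)

variable (I M) in
/-- `A` is the formal adjoint of the operator `D` with respect to `μ`:
`∫ (Du) v dμ = ∫ u (Av) dμ` for all smooth `u`, `v`. -/
def IsFormalAdjoint [MeasurableSpace M] (μ : Measure M)
    (D A : Cinf I M →ₗ[ℝ] Cinf I M) : Prop :=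
  ∀ u v : Cinf I M, ∫ x, (D u) x * v x ∂μ = ∫ x, u x * (A v) x ∂μ

variable (I M) in
/-- The data exhibiting the operator `Δ` locally as a sum of squares
`Δu = Σ_j (X_j^α)* X_j^α u` of smooth vector fields, over a finite open cover of `M`. -/
structure SumOfSquaresData [MeasurableSpace M] (μ : Measure M)
    (Δ : Cinf I M →ₗ[ℝ] Cinf I M) where
  k : ℕ
  U : Fin k → Opens M
  cover : ∀ x : M, ∃ α, x ∈ U α
  d : Fin k → ℕ
  X : ∀ α : Fin k, Fin (d α) → VectorField I M
  smoothX : ∀ α j, IsSmoothVF I M (X α j)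
  D : ∀ α : Fin k, Fin (d α) → (Cinf I M →ₗ[ℝ] Cinf I M)
  A : ∀ α : Fin k, Fin (d α) → (Cinf I M →ₗ[ℝ] Cinf I M)
  hD : ∀ α j, IsVFDerivation I M (X α j) (D α j)
  hA : ∀ α j, IsFormalAdjoint I M μ (D α j) (A α j)
  sum_of_squares : ∀ (α : Fin k) (u : Cinf I M),
    tsupport (⇑u) ⊆ (U α : Set M) → Δ u = ∑ j, A α j (D α j u)

variable (I M) in
/-- The derivative `Xu(x) = du_x(X(x))` of a smooth function along a vector field. -/
def vfApply (X : VectorField I M) (u : Cinf I M) (x : M) : ℝ :=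
  mfderiv I (modelWithCornersSelf ℝ ℝ) u x (X x)


section AuxLemmas

open MeasureTheory

set_option linter.unusedSectionVars false

theorem aux_vfApply_continuous {X : VectorField I M} (hX : IsSmoothVF I M X)
    (u : Cinf I M) : Continuous (vfApply I M X u) := by
  have h1 : Continuous (tangentMap I (modelWithCornersSelf ℝ ℝ) u) :=
    u.contMDiff.continuous_tangentMap (by simp)
  have h2 : Continuous (fun x => (⟨x, X x⟩ : TangentBundle I M)) := hX.continuous
  have h4 : Continuous (fun p : TangentBundle (modelWithCornersSelf ℝ ℝ) ℝ =>
      (Bundle.TotalSpace.toProd ℝ ℝ p).2) :=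
    continuous_snd.comp ((tangentBundleModelSpaceHomeomorph (modelWithCornersSelf ℝ ℝ)).continuous)
  exact h4.comp (h1.comp h2)

theorem aux_D_mul {X : VectorField I M} {D : Cinf I M →ₗ[ℝ] Cinf I M}
    (hD : IsVFDerivation I M X D) (f g : Cinf I M) (x : M) :
    D (f * g) x = f x * D g x + g x * D f x := by
  rw [hD (f*g) x, hD g x, hD f x]
  have hf : MDifferentiableAt I (modelWithCornersSelf ℝ ℝ) f x :=
    f.contMDiff.mdifferentiableAt (by simp)
  have hg : MDifferentiableAt I (modelWithCornersSelf ℝ ℝ) g x :=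
    g.contMDiff.mdifferentiableAt (by simp)
  have hmul := (hf.hasMFDerivAt.mul hg.hasMFDerivAt).mfderiv
  have hcoe : ⇑(f * g) = ⇑f * ⇑g := rfl
  show (mfderiv I (modelWithCornersSelf ℝ ℝ) (⇑(f*g)) x (X x) : ℝ) = _
  rw [hcoe, hmul]
  rfl

theorem aux_D_one {X : VectorField I M} {D : Cinf I M →ₗ[ℝ] Cinf I M}
    (hD : IsVFDerivation I M X D) (x : M) : D (1 : Cinf I M) x = 0 := by
  rw [hD 1 x]
  have hcoe : ⇑(1 : Cinf I M) = fun _ => (1:ℝ) := rfl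
  show (mfderiv I (modelWithCornersSelf ℝ ℝ) (⇑(1 : Cinf I M)) x (X x) : ℝ) = 0
  rw [hcoe, mfderiv_const]
  rfl

theorem aux_integrable [CompactSpace M] [MeasurableSpace M] [BorelSpace M] (μ : Measure M)
    [IsFiniteMeasure μ] {f : M → ℝ} (hf : Continuous f) : Integrable f μ :=
  hf.integrable_of_hasCompactSupport ((isClosed_tsupport f).isCompact)

theorem aux_ev_sum {ι : Type*} (s : Finset ι) (g : ι → Cinf I M) (x : M) :
    (∑ i ∈ s, g i) x = ∑ i ∈ s, g i x :=
  map_sum (ContMDiffMap.evalRingHom x : Cinf I M →+* ℝ) g s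

end AuxLemmas

/-- For a local operator `Δ` on a compact manifold `(M,μ)` which is locally a sum of
squares `Σ_j (X_j^α)* X_j^α` of smooth vector fields over a finite open cover, and for
any smooth vector field `X` that is locally a `C^∞`-combination of the `X_j^α`, there
is a constant `C > 0` with
`‖Xu‖²_{L²} ≤ C ((Δu, u)_{L²} + ‖u‖²_{L²})` for all `u ∈ C^∞(M)`. -/
theorem subelliptic_estimate_of_sum_of_squares
    [T2Space M] [SecondCountableTopology M] [CompactSpace M]
    [MeasurableSpace M] [BorelSpace M] [MeasureSpace EM] [BorelSpace EM]
    (μ : Measure M) [IsFiniteMeasure μ] (hμ : IsSmoothPositiveDensity I M μ)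
    (Δ : Cinf I M →ₗ[ℝ] Cinf I M)
    (hlocal : ∀ u : Cinf I M, tsupport ⇑(Δ u) ⊆ tsupport ⇑u)
    (hΔ : SumOfSquaresData I M μ Δ)
    (X : VectorField I M) (hX : IsSmoothVF I M X)
    (hXloc : ∀ x : M, ∃ (α : Fin hΔ.k) (U' : Opens M) (_ : x ∈ U') (_ : U' ≤ hΔ.U α)
      (a : Fin (hΔ.d α) → Cinf I ↥U'),
      ∀ y : ↥U', X (y : M) = ∑ j, a j y • hΔ.X α j (y : M)) :
    ∃ C : ℝ, 0 < C ∧ ∀ u : Cinf I M,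
      ∫ x, (vfApply I M X u x) ^ 2 ∂μ ≤
        C * ((∫ x, (Δ u) x * u x ∂μ) + ∫ x, (u x) ^ 2 ∂μ) := by
  classical
  have int : ∀ f : M → ℝ, Continuous f → MeasureTheory.Integrable f μ :=
    fun f hf => aux_integrable μ hf
  have contC : ∀ f : Cinf I M, Continuous ⇑f := fun f => f.contMDiff.continuous
  -- data from hXloc
  choose αx Ux hxmem hxle ax hax using hXloc
  -- finite subcover for the refined cover
  have hcovβ : (Set.univ : Set M) ⊆ ⋃ x : M, (Ux x : Set M) := fun y _ =>
    Set.mem_iUnion.2 ⟨y, hxmem y⟩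
  obtain ⟨sβ, hsβ⟩ := isCompact_univ.elim_finite_subcover (fun x : M => (Ux x : Set M))
    (fun x => (Ux x).isOpen) hcovβ
  obtain ⟨φ, hφ⟩ := SmoothPartitionOfUnity.exists_isSubordinate I isClosed_univ
    (fun i : ↥sβ => ((Ux (i : M)) : Set M)) (fun i => (Ux (i : M)).isOpen)
    (by
      intro y _
      have := hsβ (Set.mem_univ y)
      rw [Set.mem_iUnion₂] at this
      obtain ⟨x, hx, hy⟩ := this
      exact Set.mem_iUnion.2 ⟨⟨x, hx⟩, hy⟩)
  -- metrizability and a Lebesgue-number-style cover for the symmetry argument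
  choose κ hκ using hΔ.cover
  haveI := Manifold.metrizableSpace I M
  letI : MetricSpace M := TopologicalSpace.metrizableSpaceMetric M
  have hball : ∀ x : M, ∃ r : ℝ, 0 < r ∧ Metric.ball x (3*r) ⊆ (hΔ.U (κ x) : Set M) := by
    intro x
    obtain ⟨ε, hε, hsub⟩ := Metric.isOpen_iff.1 (hΔ.U (κ x)).isOpen x (hκ x)
    exact ⟨ε/3, by linarith, by rw [show 3*(ε/3) = ε by ring]; exact hsub⟩
  choose r hr0 hrU using hball
  have hcovγ : (Set.univ : Set M) ⊆ ⋃ x : M, Metric.ball x (r x) := fun y _ =>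
    Set.mem_iUnion.2 ⟨y, Metric.mem_ball_self (hr0 y)⟩
  obtain ⟨tγ, htγ⟩ := isCompact_univ.elim_finite_subcover (fun x : M => Metric.ball x (r x))
    (fun x => Metric.isOpen_ball) hcovγ
  obtain ⟨χ, hχ⟩ := SmoothPartitionOfUnity.exists_isSubordinate I isClosed_univ
    (fun i : ↥tγ => Metric.ball (i : M) (r (i : M))) (fun i => Metric.isOpen_ball)
    (by
      intro y _
      have := htγ (Set.mem_univ y)
      rw [Set.mem_iUnion₂] at this
      obtain ⟨x, hx, hy⟩ := this
      exact Set.mem_iUnion.2 ⟨⟨x, hx⟩, hy⟩)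
  -- pointwise sums equal one
  have hφ1 : ∀ x : M, ∑ β : ↥sβ, φ β x = 1 := fun x => by
    rw [← finsum_eq_sum_of_fintype]; exact φ.sum_eq_one (Set.mem_univ x)
  have hχ1 : ∀ x : M, ∑ γ : ↥tγ, χ γ x = 1 := fun x => by
    rw [← finsum_eq_sum_of_fintype]; exact χ.sum_eq_one (Set.mem_univ x)
  -- decompositions in `Cinf`
  have hdecφ : ∀ w : Cinf I M, (∑ β : ↥sβ, (φ β : Cinf I M) * w) = w := by
    intro w
    ext x
    rw [aux_ev_sum]
    calc ∑ β : ↥sβ, ((φ β : Cinf I M) * w) x = ∑ β : ↥sβ, φ β x * w x := rfl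
    _ = (∑ β : ↥sβ, φ β x) * w x := by rw [Finset.sum_mul]
    _ = w x := by rw [hφ1 x, one_mul]
  have hdecχ : ∀ w : Cinf I M, (∑ γ : ↥tγ, (χ γ : Cinf I M) * w) = w := by
    intro w
    ext x
    rw [aux_ev_sum]
    calc ∑ γ : ↥tγ, ((χ γ : Cinf I M) * w) x = ∑ γ : ↥tγ, χ γ x * w x := rfl
    _ = (∑ γ : ↥tγ, χ γ x) * w x := by rw [Finset.sum_mul]
    _ = w x := by rw [hχ1 x, one_mul]
  -- supports
  have hsupχU : ∀ γ : ↥tγ, tsupport ⇑(χ γ) ⊆ (hΔ.U (κ (γ : M)) : Set M) := by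
    intro γ
    refine (hχ γ).trans ((Metric.ball_subset_ball ?_).trans (hrU (γ : M)))
    have := hr0 (γ : M); linarith
  have hsupφU : ∀ β : ↥sβ, tsupport ⇑(φ β) ⊆ (hΔ.U (αx (β : M)) : Set M) :=
    fun β => (hφ β).trans (SetLike.coe_subset_coe.mpr (hxle (β : M)))
  have hmulsup : ∀ (f g : Cinf I M), tsupport ⇑(f * g) ⊆ tsupport ⇑f := by
    intro f g
    have : ⇑(f * g) = ⇑f * ⇑g := rfl
    rw [this]
    exact tsupport_mul_subset_left
  -- basic integral computation: the adjoint pairing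
  have pair : ∀ (α : Fin hΔ.k) (f g : Cinf I M),
      ∫ x, f x * (∑ j, hΔ.A α j (hΔ.D α j g)) x ∂μ
        = ∑ j, ∫ x, (hΔ.D α j f) x * (hΔ.D α j g) x ∂μ := by
    intro α f g
    have e1 : ∀ x : M, f x * (∑ j, hΔ.A α j (hΔ.D α j g)) x
        = ∑ j, f x * (hΔ.A α j (hΔ.D α j g)) x := by
      intro x
      rw [aux_ev_sum, Finset.mul_sum]
    calc ∫ x, f x * (∑ j, hΔ.A α j (hΔ.D α j g)) x ∂μ
        = ∫ x, ∑ j, f x * (hΔ.A α j (hΔ.D α j g)) x ∂μ := by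
          exact MeasureTheory.integral_congr_ae (Filter.Eventually.of_forall e1)
      _ = ∑ j, ∫ x, f x * (hΔ.A α j (hΔ.D α j g)) x ∂μ := by
          exact MeasureTheory.integral_finset_sum _ (fun j _ =>
            int _ ((contC f).mul (contC (hΔ.A α j (hΔ.D α j g)))))
      _ = ∑ j, ∫ x, (hΔ.D α j f) x * (hΔ.D α j g) x ∂μ := by
          exact Finset.sum_congr rfl (fun j _ => (hΔ.hA α j f (hΔ.D α j g)).symm)
  -- the integral of `Δ f` vanishes
  have ZERO : ∀ f : Cinf I M, ∫ x, (Δ f) x ∂μ = 0 := by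
    intro f
    have hΔf : Δ f = ∑ γ : ↥tγ, Δ ((χ γ : Cinf I M) * f) := by
      rw [← map_sum, hdecχ f]
    rw [hΔf]
    have e1 : ∀ x : M, (∑ γ : ↥tγ, Δ ((χ γ : Cinf I M) * f)) x
        = ∑ γ : ↥tγ, (Δ ((χ γ : Cinf I M) * f)) x := fun x => aux_ev_sum _ _ x
    rw [MeasureTheory.integral_congr_ae (Filter.Eventually.of_forall e1),
      MeasureTheory.integral_finset_sum _ (fun γ _ => int _ (contC _))]
    refine Finset.sum_eq_zero (fun γ _ => ?_)
    rw [hΔ.sum_of_squares (κ (γ : M)) ((χ γ : Cinf I M) * f)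
      ((hmulsup _ _).trans (hsupχU γ))]
    have e2 : ∀ x : M, (∑ j, hΔ.A (κ (γ:M)) j (hΔ.D (κ (γ:M)) j ((χ γ : Cinf I M) * f))) x
        = ∑ j, (hΔ.A (κ (γ:M)) j (hΔ.D (κ (γ:M)) j ((χ γ : Cinf I M) * f))) x :=
      fun x => aux_ev_sum _ _ x
    rw [MeasureTheory.integral_congr_ae (Filter.Eventually.of_forall e2),
      MeasureTheory.integral_finset_sum _ (fun j _ => int _ (contC _))]
    refine Finset.sum_eq_zero (fun j _ => ?_)
    have h1 : ∫ x, (hΔ.A (κ (γ:M)) j (hΔ.D (κ (γ:M)) j ((χ γ : Cinf I M) * f))) x ∂μ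
        = ∫ x, (1 : Cinf I M) x * (hΔ.A (κ (γ:M)) j (hΔ.D (κ (γ:M)) j ((χ γ : Cinf I M) * f))) x ∂μ := by
      refine MeasureTheory.integral_congr_ae (Filter.Eventually.of_forall (fun x => ?_))
      show _ = (1:ℝ) * _
      rw [one_mul]
    rw [h1, ← hΔ.hA (κ (γ:M)) j 1 _]
    have h2 : ∀ x : M, (hΔ.D (κ (γ:M)) j (1 : Cinf I M)) x
        * (hΔ.D (κ (γ:M)) j ((χ γ : Cinf I M) * f)) x = 0 := by
      intro x
      rw [aux_D_one (hΔ.hD (κ (γ:M)) j) x, zero_mul]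
    rw [MeasureTheory.integral_congr_ae (Filter.Eventually.of_forall h2)]
    exact MeasureTheory.integral_zero _ _
  -- symmetry of Δ as a bilinear form
  have SYM : ∀ v w : Cinf I M, ∫ x, v x * (Δ w) x ∂μ = ∫ x, w x * (Δ v) x ∂μ := by
    intro v w
    have key : ∀ γ δ : ↥tγ,
        ∫ x, ((χ γ : Cinf I M) * v) x * (Δ ((χ δ : Cinf I M) * w)) x ∂μ
          = ∫ x, ((χ δ : Cinf I M) * w) x * (Δ ((χ γ : Cinf I M) * v)) x ∂μ := by
      intro γ δ
      by_cases hdis : (tsupport ⇑(χ γ) ∩ tsupport ⇑(χ δ)).Nonempty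
      · obtain ⟨z, hzγ, hzδ⟩ := hdis
        have hsup2 : ∃ α : Fin hΔ.k, tsupport ⇑(χ γ) ⊆ (hΔ.U α : Set M)
            ∧ tsupport ⇑(χ δ) ⊆ (hΔ.U α : Set M) := by
          have hzγ' : dist z (γ : M) < r (γ : M) := Metric.mem_ball.1 (hχ γ hzγ)
          have hzδ' : dist z (δ : M) < r (δ : M) := Metric.mem_ball.1 (hχ δ hzδ)
          rcases le_total (r (δ : M)) (r (γ : M)) with hle | hle
          · refine ⟨κ (γ : M), hsupχU γ, ?_⟩
            refine (hχ δ).trans (fun y hy => hrU (γ : M) ?_)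
            have hyδ : dist y (δ : M) < r (δ : M) := Metric.mem_ball.1 hy
            have : dist y (γ : M) < 3 * r (γ : M) := by
              calc dist y (γ : M) ≤ dist y (δ : M) + dist (δ : M) z + dist z (γ : M) :=
                dist_triangle4 y (δ : M) z (γ : M)
              _ < r (δ : M) + r (δ : M) + r (γ : M) := by
                  rw [dist_comm (δ : M) z]
                  exact add_lt_add (add_lt_add hyδ hzδ') hzγ'
              _ ≤ 3 * r (γ : M) := by linarith
            exact Metric.mem_ball.2 this
          · refine ⟨κ (δ : M), ?_, hsupχU δ⟩
            refine (hχ γ).trans (fun y hy => hrU (δ : M) ?_)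
            have hyγ : dist y (γ : M) < r (γ : M) := Metric.mem_ball.1 hy
            have : dist y (δ : M) < 3 * r (δ : M) := by
              calc dist y (δ : M) ≤ dist y (γ : M) + dist (γ : M) z + dist z (δ : M) :=
                dist_triangle4 y (γ : M) z (δ : M)
              _ < r (γ : M) + r (γ : M) + r (δ : M) := by
                  rw [dist_comm (γ : M) z]
                  exact add_lt_add (add_lt_add hyγ hzγ') hzδ'
              _ ≤ 3 * r (δ : M) := by linarith
            exact Metric.mem_ball.2 this
        obtain ⟨α, hsγ, hsδ⟩ := hsup2
        rw [hΔ.sum_of_squares α ((χ δ : Cinf I M) * w) ((hmulsup _ _).trans hsδ),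
          hΔ.sum_of_squares α ((χ γ : Cinf I M) * v) ((hmulsup _ _).trans hsγ),
          pair α ((χ γ : Cinf I M) * v) ((χ δ : Cinf I M) * w),
          pair α ((χ δ : Cinf I M) * w) ((χ γ : Cinf I M) * v)]
        refine Finset.sum_congr rfl (fun j _ => ?_)
        refine MeasureTheory.integral_congr_ae (Filter.Eventually.of_forall (fun x => ?_))
        exact mul_comm _ _
      · have hdis' : tsupport ⇑(χ γ) ∩ tsupport ⇑(χ δ) = ∅ :=
          Set.not_nonempty_iff_eq_empty.1 hdis
        have h0 : ∀ (p q : ↥tγ) (a b : Cinf I M),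
            tsupport ⇑(χ p) ∩ tsupport ⇑(χ q) = ∅ →
            ∫ x, ((χ p : Cinf I M) * a) x * (Δ ((χ q : Cinf I M) * b)) x ∂μ = 0 := by
          intro p q a b hpq
          have hz : ∀ x : M, ((χ p : Cinf I M) * a) x * (Δ ((χ q : Cinf I M) * b)) x = 0 := by
            intro x
            by_cases hx : x ∈ tsupport ⇑(χ p)
            · have hxq : x ∉ tsupport ⇑((χ q : Cinf I M) * b) := by
                intro hmem
                have : x ∈ tsupport ⇑(χ p) ∩ tsupport ⇑(χ q) := ⟨hx, hmulsup _ b hmem⟩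
                rw [hpq] at this
                exact this
              have : x ∉ tsupport ⇑(Δ ((χ q : Cinf I M) * b)) :=
                fun hmem => hxq (hlocal _ hmem)
              rw [image_eq_zero_of_notMem_tsupport this, mul_zero]
            · have hx0 : χ p x = 0 := image_eq_zero_of_notMem_tsupport hx
              show χ p x * a x * _ = 0
              rw [hx0, zero_mul, zero_mul]
          rw [MeasureTheory.integral_congr_ae (Filter.Eventually.of_forall hz)]
          exact MeasureTheory.integral_zero _ _
        rw [h0 γ δ v w hdis', h0 δ γ w v (by rw [Set.inter_comm]; exact hdis')]
    have expandΔ : ∀ v w : Cinf I M, ∫ x, v x * (Δ w) x ∂μ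
        = ∑ γ : ↥tγ, ∑ δ : ↥tγ,
            ∫ x, ((χ γ : Cinf I M) * v) x * (Δ ((χ δ : Cinf I M) * w)) x ∂μ := by
      intro v w
      have hw : Δ w = ∑ δ : ↥tγ, Δ ((χ δ : Cinf I M) * w) := by rw [← map_sum, hdecχ w]
      calc ∫ x, v x * (Δ w) x ∂μ
          = ∫ x, ∑ δ : ↥tγ, v x * (Δ ((χ δ : Cinf I M) * w)) x ∂μ := by
            refine MeasureTheory.integral_congr_ae (Filter.Eventually.of_forall (fun x => ?_))
            beta_reduce
            rw [hw, aux_ev_sum, Finset.mul_sum]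
        _ = ∑ δ : ↥tγ, ∫ x, v x * (Δ ((χ δ : Cinf I M) * w)) x ∂μ :=
            MeasureTheory.integral_finset_sum _ (fun δ _ =>
              int _ ((contC v).mul (contC _)))
        _ = ∑ δ : ↥tγ, ∑ γ : ↥tγ,
              ∫ x, ((χ γ : Cinf I M) * v) x * (Δ ((χ δ : Cinf I M) * w)) x ∂μ := by
            refine Finset.sum_congr rfl (fun δ _ => ?_)
            have hsum := MeasureTheory.integral_finset_sum (μ := μ) Finset.univ
              (f := fun (γ : ↥tγ) (x : M) =>
                ((χ γ : Cinf I M) * v) x * (Δ ((χ δ : Cinf I M) * w)) x)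
              (fun γ _ => int _ ((contC _).mul (contC _)))
            rw [← hsum]
            refine MeasureTheory.integral_congr_ae (Filter.Eventually.of_forall (fun x => ?_))
            beta_reduce
            have heach : ∀ γ : ↥tγ, ((χ γ : Cinf I M) * v) x * (Δ ((χ δ : Cinf I M) * w)) x
                = χ γ x * (v x * (Δ ((χ δ : Cinf I M) * w)) x) := by
              intro γ
              show χ γ x * v x * _ = _
              ring
            rw [Finset.sum_congr rfl (fun γ _ => heach γ), ← Finset.sum_mul, hχ1 x, one_mul]
        _ = ∑ γ : ↥tγ, ∑ δ : ↥tγ,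
              ∫ x, ((χ γ : Cinf I M) * v) x * (Δ ((χ δ : Cinf I M) * w)) x ∂μ :=
            Finset.sum_comm
    rw [expandΔ v w, expandΔ w v, Finset.sum_comm]
    exact Finset.sum_congr rfl (fun δ _ => Finset.sum_congr rfl (fun γ _ => key γ δ))
  -- sum of the partition φ in Cinf
  have hφsum1 : (∑ β : ↥sβ, (φ β : Cinf I M)) = 1 := by
    have h := hdecφ 1
    simpa [mul_one] using h
  -- coefficient bounds on the supports of the φ's
  have hCbound : ∀ β : ↥sβ, ∃ C : ℝ, 0 ≤ C ∧ ∀ (x : M) (hx' : x ∈ Ux (β : M)),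
      x ∈ tsupport ⇑(φ β) → ∑ j, (ax (β : M) j ⟨x, hx'⟩)^2 ≤ C := by
    intro β
    set K := tsupport ⇑(φ β) with hK
    have hKc : IsCompact K := (isClosed_tsupport _).isCompact
    haveI : CompactSpace K := isCompact_iff_compactSpace.1 hKc
    have hts : K ⊆ (Ux (β : M) : Set M) := hφ β
    have hFcont : Continuous (fun y : ↥(Ux (β : M)) => ∑ j, (ax (β : M) j y)^2) :=
      continuous_finset_sum _ (fun j _ => ((ax (β : M) j).contMDiff.continuous).pow 2)
    have hmap : Continuous (fun z : K => (⟨(z : M), hts z.2⟩ : ↥(Ux (β : M)))) :=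
      Continuous.subtype_mk continuous_subtype_val _
    have hcpt : IsCompact (Set.range (fun z : K =>
        ∑ j, (ax (β : M) j ⟨(z : M), hts z.2⟩)^2)) :=
      isCompact_range (hFcont.comp hmap)
    obtain ⟨C0, hC0⟩ := hcpt.bddAbove
    refine ⟨max C0 0, le_max_right _ _, ?_⟩
    intro x hx' hxK
    have hmem : (∑ j, (ax (β : M) j ⟨x, hx'⟩)^2) ∈ Set.range (fun z : K =>
        ∑ j, (ax (β : M) j ⟨(z : M), hts z.2⟩)^2) := ⟨⟨x, hxK⟩, rfl⟩
    exact le_trans (hC0 hmem) (le_max_left _ _)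
  choose Cb hCb using hCbound
  refine ⟨(∑ β : ↥sβ, Cb β) + 1, ?_, ?_⟩
  · have := Finset.sum_nonneg (fun (β : ↥sβ) (_ : β ∈ Finset.univ) => (hCb β).1)
    linarith
  intro u
  -- expansion of the quadratic form
  have hQ1 : ∫ x, (Δ u) x * u x ∂μ
      = ∑ β : ↥sβ, ∑ j, ∫ x, (hΔ.D (αx (β:M)) j u) x
          * (hΔ.D (αx (β:M)) j ((φ β : Cinf I M) * u)) x ∂μ := by
    have hu : Δ u = ∑ β : ↥sβ, Δ ((φ β : Cinf I M) * u) := by rw [← map_sum, hdecφ u]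
    calc ∫ x, (Δ u) x * u x ∂μ
        = ∫ x, ∑ β : ↥sβ, u x * (Δ ((φ β : Cinf I M) * u)) x ∂μ := by
          refine MeasureTheory.integral_congr_ae (Filter.Eventually.of_forall (fun x => ?_))
          beta_reduce
          rw [hu, aux_ev_sum, Finset.sum_mul]
          exact Finset.sum_congr rfl (fun β _ => mul_comm _ _)
      _ = ∑ β : ↥sβ, ∫ x, u x * (Δ ((φ β : Cinf I M) * u)) x ∂μ :=
          MeasureTheory.integral_finset_sum _ (fun β _ => int _ ((contC u).mul (contC _)))
      _ = ∑ β : ↥sβ, ∑ j, ∫ x, (hΔ.D (αx (β:M)) j u) x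
            * (hΔ.D (αx (β:M)) j ((φ β : Cinf I M) * u)) x ∂μ := by
          refine Finset.sum_congr rfl (fun β _ => ?_)
          rw [hΔ.sum_of_squares (αx (β:M)) ((φ β : Cinf I M) * u)
            ((hmulsup _ _).trans (hsupφU β))]
          exact pair (αx (β:M)) u ((φ β : Cinf I M) * u)
  -- Leibniz splitting
  have hsplit : ∀ (β : ↥sβ) (j : Fin (hΔ.d (αx (β:M)))),
      ∫ x, (hΔ.D (αx (β:M)) j u) x * (hΔ.D (αx (β:M)) j ((φ β : Cinf I M) * u)) x ∂μ
        = (∫ x, φ β x * ((hΔ.D (αx (β:M)) j u) x)^2 ∂μ)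
          + ∫ x, (hΔ.D (αx (β:M)) j u) x
              * (u x * (hΔ.D (αx (β:M)) j (φ β : Cinf I M)) x) ∂μ := by
    intro β j
    rw [← MeasureTheory.integral_add (int (fun x => φ β x * ((hΔ.D (αx (β:M)) j u) x)^2)
      ((contC (φ β)).mul ((contC _).pow 2)))
      (int (fun x => (hΔ.D (αx (β:M)) j u) x * (u x * (hΔ.D (αx (β:M)) j (φ β : Cinf I M)) x))
        ((contC _).mul ((contC u).mul (contC _))))]
    refine MeasureTheory.integral_congr_ae (Filter.Eventually.of_forall (fun x => ?_))
    beta_reduce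
    rw [aux_D_mul (hΔ.hD (αx (β:M)) j) (φ β) u x]
    ring
  -- the cross terms
  have hcross2 : ∀ β : ↥sβ,
      ∑ j, ∫ x, (hΔ.D (αx (β:M)) j u) x
          * (u x * (hΔ.D (αx (β:M)) j (φ β : Cinf I M)) x) ∂μ
        = (1/2) * ∫ x, (u * u : Cinf I M) x * (Δ (φ β : Cinf I M)) x ∂μ := by
    intro β
    have h1 : ∀ j : Fin (hΔ.d (αx (β:M))),
        ∫ x, (hΔ.D (αx (β:M)) j u) x * (u x * (hΔ.D (αx (β:M)) j (φ β : Cinf I M)) x) ∂μ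
          = (1/2) * ∫ x, (u*u : Cinf I M) x
              * (hΔ.A (αx (β:M)) j (hΔ.D (αx (β:M)) j (φ β : Cinf I M))) x ∂μ := by
      intro j
      rw [← hΔ.hA (αx (β:M)) j (u*u) (hΔ.D (αx (β:M)) j (φ β : Cinf I M)),
        ← MeasureTheory.integral_const_mul]
      refine MeasureTheory.integral_congr_ae (Filter.Eventually.of_forall (fun x => ?_))
      beta_reduce
      rw [aux_D_mul (hΔ.hD (αx (β:M)) j) u u x]
      ring
    rw [Finset.sum_congr rfl (fun j _ => h1 j), ← Finset.mul_sum]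
    congr 1
    have hsum := MeasureTheory.integral_finset_sum (μ := μ) Finset.univ
      (f := fun (j : Fin (hΔ.d (αx (β:M)))) (x : M) =>
        (u*u : Cinf I M) x * (hΔ.A (αx (β:M)) j (hΔ.D (αx (β:M)) j (φ β : Cinf I M))) x)
      (fun j _ => int _ ((contC _).mul (contC _)))
    rw [← hsum]
    refine MeasureTheory.integral_congr_ae (Filter.Eventually.of_forall (fun x => ?_))
    beta_reduce
    rw [hΔ.sum_of_squares (αx (β:M)) (φ β : Cinf I M) (hsupφU β), aux_ev_sum, Finset.mul_sum]
  have hcrossT : ∑ β : ↥sβ, ∑ j, ∫ x, (hΔ.D (αx (β:M)) j u) x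
      * (u x * (hΔ.D (αx (β:M)) j (φ β : Cinf I M)) x) ∂μ = 0 := by
    rw [Finset.sum_congr rfl (fun β _ => hcross2 β), ← Finset.mul_sum]
    have hsum := MeasureTheory.integral_finset_sum (μ := μ) Finset.univ
      (f := fun (β : ↥sβ) (x : M) => (u*u : Cinf I M) x * (Δ (φ β : Cinf I M)) x)
      (fun β _ => int _ ((contC _).mul (contC _)))
    rw [← hsum]
    have e : ∀ x : M, (∑ β : ↥sβ, (u*u : Cinf I M) x * (Δ (φ β : Cinf I M)) x)
        = (u*u : Cinf I M) x * (Δ (1 : Cinf I M)) x := by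
      intro x
      rw [← Finset.mul_sum]
      congr 1
      rw [← aux_ev_sum, ← map_sum, hφsum1]
    rw [MeasureTheory.integral_congr_ae (Filter.Eventually.of_forall e), SYM (u*u) 1]
    have e2 : ∀ x : M, (1 : Cinf I M) x * (Δ (u*u : Cinf I M)) x = (Δ (u*u : Cinf I M)) x :=
      fun x => one_mul _
    rw [MeasureTheory.integral_congr_ae (Filter.Eventually.of_forall e2), ZERO (u*u), mul_zero]
  -- the master identity
  have hQ : ∫ x, (Δ u) x * u x ∂μ
      = ∑ β : ↥sβ, ∑ j, ∫ x, φ β x * ((hΔ.D (αx (β:M)) j u) x)^2 ∂μ := by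
    rw [hQ1]
    rw [Finset.sum_congr rfl (fun β _ => Finset.sum_congr rfl (fun j _ => hsplit β j))]
    rw [Finset.sum_congr rfl (fun (β : ↥sβ) _ => Finset.sum_add_distrib),
      Finset.sum_add_distrib, hcrossT, add_zero]
  have hPpos : ∀ (β : ↥sβ) (j : Fin (hΔ.d (αx (β:M)))),
      0 ≤ ∫ x, φ β x * ((hΔ.D (αx (β:M)) j u) x)^2 ∂μ :=
    fun β j => MeasureTheory.integral_nonneg
      (fun x => mul_nonneg (φ.nonneg β x) (sq_nonneg _))
  -- left-hand side expansion
  have hvf : Continuous (vfApply I M X u) := aux_vfApply_continuous hX u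
  have hLHS1 : ∫ x, (vfApply I M X u x)^2 ∂μ
      = ∑ β : ↥sβ, ∫ x, φ β x * (vfApply I M X u x)^2 ∂μ := by
    have hsum := MeasureTheory.integral_finset_sum (μ := μ) Finset.univ
      (f := fun (β : ↥sβ) (x : M) => φ β x * (vfApply I M X u x)^2)
      (fun β _ => int _ ((contC (φ β)).mul (hvf.pow 2)))
    rw [← hsum]
    refine MeasureTheory.integral_congr_ae (Filter.Eventually.of_forall (fun x => ?_))
    beta_reduce
    rw [← Finset.sum_mul, hφ1 x, one_mul]
  -- pointwise expression of X in terms of the local frame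
  have hXpt : ∀ (β : ↥sβ) (x : M) (hx' : x ∈ Ux (β:M)),
      vfApply I M X u x = ∑ j, ax (β:M) j ⟨x, hx'⟩ * (hΔ.D (αx (β:M)) j u) x := by
    intro β x hx'
    have hXx : X x = ∑ j, ax (β:M) j ⟨x, hx'⟩ • hΔ.X (αx (β:M)) j x := hax (β:M) ⟨x, hx'⟩
    show (mfderiv I (modelWithCornersSelf ℝ ℝ) u x (X x) : ℝ) = _
    rw [hXx, map_sum]
    refine Finset.sum_congr rfl (fun j _ => ?_)
    rw [_root_.map_smul, ← hΔ.hD (αx (β:M)) j u x]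
    rfl
  -- integral bound on each piece
  have hβbound : ∀ β : ↥sβ, ∫ x, φ β x * (vfApply I M X u x)^2 ∂μ
      ≤ Cb β * ∫ x, φ β x * (∑ j, ((hΔ.D (αx (β:M)) j u) x)^2) ∂μ := by
    intro β
    rw [← MeasureTheory.integral_const_mul]
    refine MeasureTheory.integral_mono (int _ ((contC (φ β)).mul (hvf.pow 2)))
      (int _ (continuous_const.mul ((contC (φ β)).mul
        (continuous_finset_sum _ (fun j _ => (contC _).pow 2))))) (fun x => ?_)
    beta_reduce
    by_cases hx : x ∈ tsupport ⇑(φ β)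
    · have hx' : x ∈ Ux (β:M) := hφ β hx
      have h1 : (vfApply I M X u x)^2
          ≤ (∑ j, (ax (β:M) j ⟨x, hx'⟩)^2) * ∑ j, ((hΔ.D (αx (β:M)) j u) x)^2 := by
        rw [hXpt β x hx']
        exact Finset.sum_mul_sq_le_sq_mul_sq _ _ _
      have h2 : (∑ j, (ax (β:M) j ⟨x, hx'⟩)^2) ≤ Cb β := (hCb β).2 x hx' hx
      calc φ β x * (vfApply I M X u x)^2
          ≤ φ β x * ((∑ j, (ax (β:M) j ⟨x, hx'⟩)^2) * ∑ j, ((hΔ.D (αx (β:M)) j u) x)^2) :=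
            mul_le_mul_of_nonneg_left h1 (φ.nonneg β x)
        _ ≤ φ β x * (Cb β * ∑ j, ((hΔ.D (αx (β:M)) j u) x)^2) := by
            refine mul_le_mul_of_nonneg_left (mul_le_mul_of_nonneg_right h2 ?_) (φ.nonneg β x)
            exact Finset.sum_nonneg (fun j _ => sq_nonneg _)
        _ = Cb β * (φ β x * ∑ j, ((hΔ.D (αx (β:M)) j u) x)^2) := by ring
    · have hx0 : φ β x = 0 := image_eq_zero_of_notMem_tsupport hx
      rw [hx0]
      simp
  have hIβ : ∀ β : ↥sβ, ∫ x, φ β x * (∑ j, ((hΔ.D (αx (β:M)) j u) x)^2) ∂μ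
      = ∑ j, ∫ x, φ β x * ((hΔ.D (αx (β:M)) j u) x)^2 ∂μ := by
    intro β
    have hsum := MeasureTheory.integral_finset_sum (μ := μ) Finset.univ
      (f := fun (j : Fin (hΔ.d (αx (β:M)))) (x : M) =>
        φ β x * ((hΔ.D (αx (β:M)) j u) x)^2)
      (fun j _ => int _ ((contC (φ β)).mul ((contC _).pow 2)))
    rw [← hsum]
    refine MeasureTheory.integral_congr_ae (Filter.Eventually.of_forall (fun x => ?_))
    beta_reduce
    rw [Finset.mul_sum]
  -- final chain
  have hN : 0 ≤ ∫ x, (u x)^2 ∂μ := MeasureTheory.integral_nonneg (fun x => sq_nonneg _)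
  have hP : 0 ≤ ∫ x, (Δ u) x * u x ∂μ := by
    rw [hQ]
    exact Finset.sum_nonneg (fun β _ => Finset.sum_nonneg (fun j _ => hPpos β j))
  have hS0 : 0 ≤ ∑ β : ↥sβ, Cb β :=
    Finset.sum_nonneg (fun (β : ↥sβ) _ => (hCb β).1)
  have hchain : ∫ x, (vfApply I M X u x)^2 ∂μ
      ≤ (∑ β : ↥sβ, Cb β) * ∫ x, (Δ u) x * u x ∂μ := by
    rw [hLHS1, hQ]
    calc ∑ β : ↥sβ, ∫ x, φ β x * (vfApply I M X u x)^2 ∂μ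
        ≤ ∑ β : ↥sβ, Cb β * ∫ x, φ β x * (∑ j, ((hΔ.D (αx (β:M)) j u) x)^2) ∂μ :=
          Finset.sum_le_sum (fun β _ => hβbound β)
      _ = ∑ β : ↥sβ, Cb β * ∑ j, ∫ x, φ β x * ((hΔ.D (αx (β:M)) j u) x)^2 ∂μ :=
          Finset.sum_congr rfl (fun β _ => by rw [hIβ β])
      _ ≤ ∑ β : ↥sβ, (∑ β' : ↥sβ, Cb β') * ∑ j, ∫ x, φ β x * ((hΔ.D (αx (β:M)) j u) x)^2 ∂μ := by
          refine Finset.sum_le_sum (fun β _ => ?_)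
          refine mul_le_mul_of_nonneg_right ?_ (Finset.sum_nonneg (fun j _ => hPpos β j))
          exact Finset.single_le_sum (fun (b : ↥sβ) _ => (hCb b).1) (Finset.mem_univ β)
      _ = (∑ β' : ↥sβ, Cb β') * ∑ β : ↥sβ, ∑ j,
            ∫ x, φ β x * ((hΔ.D (αx (β:M)) j u) x)^2 ∂μ := by
          rw [Finset.mul_sum]
  calc ∫ x, (vfApply I M X u x)^2 ∂μ
      ≤ (∑ β : ↥sβ, Cb β) * ∫ x, (Δ u) x * u x ∂μ := hchain
    _ ≤ ((∑ β : ↥sβ, Cb β) + 1) * ((∫ x, (Δ u) x * u x ∂μ) + ∫ x, (u x)^2 ∂μ) := by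
        nlinarith [mul_nonneg hS0 hN, hP, hN]
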